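/- On the elliptic curve $y^2 = x(x^2 - e^2(e-1)x + e^3(2e+1))$ over $\mathbb{Q}(e)$, the point $(0,0)$ has order $2$ and the point $(e^3, e^3 + e^4)$ lies on the curve and has infinite order. -/

import Mathlib

/-!
On a curve `y² = x(x² + a₂x + a₄)` the `x`-coordinate of a double `2Q` is the square
`((x_Q² - a₄) / (2y_Q))²`; in particular a point `(0, y)` can only be a double if `a₄` is a square.
Here `a₂² - 4a₄ = e³(e + 1)²(e - 4)` is not a square in `ℚ(e)`, so `T = (0, 0)` is the only point
of order `2`. If `P = (e³, e³ + e⁴)` had finite order, one of `P`, `T`, `P + T` would be a double.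
But `x(P) = e³`, `a₄ = e³(2e + 1)` and `x(P + T) = 2e + 1` are not squares: each is a square times
`πb` with `π` prime in `ℚ[e]` and `π ∤ b`, and `ℚ[e]` is integrally closed.
-/

noncomputable section

/-- The elliptic curve `y² = x(x² - e²(e-1)x + e³(2e+1))` over `ℚ(e)`. -/
def W18 : WeierstrassCurve.Affine (RatFunc ℚ) :=
  { a₁ := 0, a₂ := -(RatFunc.X ^ 2 * (RatFunc.X - 1)), a₃ := 0,
    a₄ := RatFunc.X ^ 3 * (2 * RatFunc.X + 1), a₆ := 0 }

open WeierstrassCurve.Affine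

theorem exists_two_nsmul_eq_of_isOfFinAddOrder {G : Type*} [AddMonoid G] {P T : G}
    (hT : ∀ Q : G, 2 • Q = 0 → Q = 0 ∨ Q = T) (hP : IsOfFinAddOrder P) :
    (∃ Q, 2 • Q = P) ∨ (∃ Q, 2 • Q = T) ∨ ∃ Q, 2 • Q = P + T := by
  have hn := addOrderOf_nsmul_eq_zero P
  rcases Nat.even_or_odd' (addOrderOf P) with ⟨m, hm | hm⟩
  · have hmT : m • P = T := by
      have hm0 : m ≠ 0 := by
        rintro rfl
        exact hP.addOrderOf_pos.ne' (by simpa using hm)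
      refine (hT _ ?_).resolve_left (nsmul_ne_zero_of_lt_addOrderOf hm0 (by omega))
      rw [← mul_nsmul', ← hm, hn]
    rcases Nat.even_or_odd' m with ⟨k, rfl | rfl⟩
    · exact Or.inr (Or.inl ⟨k • P, by rw [← mul_nsmul', hmT]⟩)
    · refine Or.inr (Or.inr ⟨(k + 1) • P, ?_⟩)
      rw [← hmT, ← mul_nsmul', ← succ_nsmul', mul_add, mul_one]
  · refine Or.inl ⟨(m + 1) • P, ?_⟩
    rw [← mul_nsmul', show 2 * (m + 1) = addOrderOf P + 1 by omega, succ_nsmul, hn, zero_add]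

theorem not_isSquare_algebraMap_mul {R K : Type*} [CommRing R] [IsDomain R] [Field K]
    [Algebra R K] [IsFractionRing R K] [IsIntegrallyClosed R] {p b : R} (hp : Prime p)
    (hb : ¬p ∣ b) : ¬IsSquare (algebraMap R K (p * b)) := by
  rintro ⟨r, hr⟩
  obtain ⟨s, rfl⟩ := IsIntegrallyClosed.exists_algebraMap_eq_of_isIntegral_pow (R := R)
    (x := r) two_pos (by rw [sq, ← hr]; exact isIntegral_algebraMap)
  have hs : p * b = s * s := IsFractionRing.injective R K (by rw [hr, map_mul])
  obtain ⟨t, rfl⟩ := hp.dvd_of_dvd_pow (n := 2) ⟨b, by rw [sq, ← hs]⟩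
  refine hb ⟨t * t, mul_left_cancel₀ hp.ne_zero ?_⟩
  rw [hs]; ring

theorem not_isSquare_mul_sq {F : Type*} [Field F] {a c : F} (ha : ¬IsSquare a) (hc : c ≠ 0) :
    ¬IsSquare (a * c ^ 2) := by
  rintro ⟨r, hr⟩
  exact ha ⟨r / c, by field_simp; linear_combination hr⟩

namespace WeierstrassCurve.Affine

variable {F : Type*} [Field F] [DecidableEq F] {W : Affine F}

theorem addOrderOf_some_of_Y_eq_zero (ha₁ : W.a₁ = 0) (ha₃ : W.a₃ = 0) {x : F}
    (h : W.Nonsingular x 0) : addOrderOf (Point.some x 0 h) = 2 :=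
  addOrderOf_eq_prime (by rw [two_nsmul]; exact Point.add_self_of_Y_eq (by simp [negY, ha₁, ha₃]))
    (Point.some_ne_zero h)

theorem exists_mul_sq_eq_sq_of_two_nsmul_eq_some (ha₁ : W.a₁ = 0) (ha₃ : W.a₃ = 0)
    (ha₆ : W.a₆ = 0) {Q : W.Point} {x y : F} {h : W.Nonsingular x y}
    (hQ : 2 • Q = Point.some x y h) : ∃ u w : F, w ≠ 0 ∧ x * w ^ 2 = (u ^ 2 - W.a₄) ^ 2 := by
  rw [two_nsmul] at hQ
  rcases Q with _ | ⟨x₁, y₁, h₁⟩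
  · exact absurd hQ.symm (Point.some_ne_zero h)
  by_cases hy : y₁ = W.negY x₁ y₁
  · rw [Point.add_self_of_Y_eq hy] at hQ
    exact absurd hQ.symm (Point.some_ne_zero h)
  rw [Point.add_self_of_Y_ne hy, Point.some.injEq] at hQ
  have hw : y₁ - W.negY x₁ y₁ ≠ 0 := sub_ne_zero.mpr hy
  refine ⟨x₁, y₁ - W.negY x₁ y₁, hw, ?_⟩
  have heq := (equation_iff x₁ y₁).mp h₁.1
  have hs : W.slope x₁ x₁ y₁ y₁ * (y₁ - W.negY x₁ y₁) =
      3 * x₁ ^ 2 + 2 * W.a₂ * x₁ + W.a₄ - W.a₁ * y₁ := by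
    rw [slope_of_Y_ne rfl hy, div_mul_cancel₀ _ hw]
  rw [← hQ.1, addX]
  simp only [negY, ha₁, ha₃, ha₆, zero_mul, sub_zero, add_zero] at hs heq ⊢
  linear_combination (W.slope x₁ x₁ y₁ y₁ * (2 * y₁) + 3 * x₁ ^ 2 + 2 * W.a₂ * x₁ + W.a₄) * hs
    - 4 * (2 * x₁ + W.a₂) * heq

theorem isSquare_of_two_nsmul_eq_some (ha₁ : W.a₁ = 0) (ha₃ : W.a₃ = 0) (ha₆ : W.a₆ = 0)
    {Q : W.Point} {x y : F} {h : W.Nonsingular x y} (hQ : 2 • Q = Point.some x y h) :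
    IsSquare x := by
  obtain ⟨u, w, hw, hx⟩ := exists_mul_sq_eq_sq_of_two_nsmul_eq_some ha₁ ha₃ ha₆ hQ
  exact ⟨(u ^ 2 - W.a₄) / w, by field_simp; linear_combination hx⟩

theorem isSquare_a₄_of_two_nsmul_eq_some_zero (ha₁ : W.a₁ = 0) (ha₃ : W.a₃ = 0)
    (ha₆ : W.a₆ = 0) {Q : W.Point} {y : F} {h : W.Nonsingular 0 y}
    (hQ : 2 • Q = Point.some 0 y h) : IsSquare W.a₄ := by
  obtain ⟨u, w, -, hx⟩ := exists_mul_sq_eq_sq_of_two_nsmul_eq_some ha₁ ha₃ ha₆ hQ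
  have hu : (u ^ 2 - W.a₄) ^ 2 = 0 := by rw [← hx, zero_mul]
  exact ⟨u, by linear_combination -(pow_eq_zero_iff two_ne_zero).mp hu⟩

theorem eq_zero_or_eq_some_zero_zero_of_two_nsmul_eq_zero [NeZero (2 : F)] (ha₁ : W.a₁ = 0)
    (ha₃ : W.a₃ = 0) (ha₆ : W.a₆ = 0) (hΔ : ¬IsSquare (W.a₂ ^ 2 - 4 * W.a₄))
    (h₀ : W.Nonsingular 0 0) {Q : W.Point} (hQ : 2 • Q = 0) : Q = 0 ∨ Q = Point.some 0 0 h₀ := by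
  rcases Q with _ | ⟨x, y, h⟩
  · exact Or.inl rfl
  have hy : y = W.negY x y := by
    by_contra hy
    rw [two_nsmul, Point.add_self_of_Y_ne hy] at hQ
    exact Point.some_ne_zero _ hQ
  have hy0 : y = 0 := by
    simp only [negY, ha₁, ha₃, zero_mul, sub_zero] at hy
    exact (mul_eq_zero.mp (by linear_combination hy : (2 : F) * y = 0)).resolve_left two_ne_zero
  subst hy0
  have hx : x * (x ^ 2 + W.a₂ * x + W.a₄) = 0 := by
    have heq := (equation_iff x 0).mp h.1
    simp only [ha₁, ha₃, ha₆] at heq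
    linear_combination -heq
  obtain rfl : x = 0 := (mul_eq_zero.mp hx).resolve_right fun hq ↦
    hΔ ⟨2 * x + W.a₂, by linear_combination -4 * hq⟩
  exact Or.inr rfl

end WeierstrassCurve.Affine

namespace RatFunc

variable {K : Type*} [Field K]

theorem not_isSquare_X : ¬IsSquare (X : RatFunc K) := by
  simpa [algebraMap_X] using not_isSquare_algebraMap_mul (R := Polynomial K) (K := RatFunc K)
    Polynomial.prime_X Polynomial.prime_X.not_dvd_one

theorem not_isSquare_X_pow_three : ¬IsSquare (X ^ 3 : RatFunc K) := by
  simpa [← pow_succ'] using not_isSquare_mul_sq (not_isSquare_X (K := K)) X_ne_zero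

theorem X_add_one_ne_zero : (X + 1 : RatFunc K) ≠ 0 := by
  simpa [algebraMap_X] using
    (map_ne_zero_iff _ (IsFractionRing.injective (Polynomial K) (RatFunc K))).2
      (Polynomial.X_add_C_ne_zero (1 : K))

end RatFunc

namespace W18

open RatFunc

theorem not_isSquare_two_mul_X_add_one : ¬IsSquare (2 * X + 1 : RatFunc ℚ) := by
  have hp : Prime (2 * Polynomial.X + 1 : Polynomial ℚ) :=
    (Polynomial.irreducible_of_degree_eq_one (by compute_degree!)).prime
  simpa [algebraMap_X, map_ofNat] using
    not_isSquare_algebraMap_mul (K := RatFunc ℚ) hp hp.not_dvd_one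

theorem not_isSquare_a₄ : ¬IsSquare W18.a₄ := by
  have h := not_isSquare_algebraMap_mul (K := RatFunc ℚ) (R := Polynomial ℚ) Polynomial.prime_X
    (b := 2 * Polynomial.X + 1) (by norm_num [Polynomial.X_dvd_iff])
  simp only [map_mul, map_add, map_ofNat, map_one, algebraMap_X] at h
  have ha₄ : W18.a₄ = X * (2 * X + 1) * X ^ 2 := by
    change X ^ 3 * _ = _
    ring
  rw [ha₄]
  exact not_isSquare_mul_sq h X_ne_zero

theorem not_isSquare_a₂_sq_sub_four_mul_a₄ : ¬IsSquare (W18.a₂ ^ 2 - 4 * W18.a₄) := by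
  have h := not_isSquare_algebraMap_mul (K := RatFunc ℚ) (R := Polynomial ℚ) Polynomial.prime_X
    (b := Polynomial.X - 4) (by norm_num [Polynomial.X_dvd_iff])
  simp only [map_mul, map_sub, map_ofNat, algebraMap_X] at h
  have hΔ : W18.a₂ ^ 2 - 4 * W18.a₄ = X * (X - 4) * (X * (X + 1)) ^ 2 := by
    change (-(X ^ 2 * (X - 1))) ^ 2 - 4 * (X ^ 3 * (2 * X + 1)) = _
    ring
  rw [hΔ]
  exact not_isSquare_mul_sq h (mul_ne_zero X_ne_zero X_add_one_ne_zero)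

theorem nonsingular_zero_zero : W18.Nonsingular 0 0 :=
  (nonsingular_zero).mpr ⟨rfl, Or.inr fun h ↦ not_isSquare_a₄ (h ▸ IsSquare.zero)⟩

theorem nonsingular_X_pow_three : W18.Nonsingular (X ^ 3) (X ^ 3 + X ^ 4) := by
  refine (nonsingular_iff' _ _).mpr ⟨by rw [equation_iff]; simp only [W18]; ring, Or.inr ?_⟩
  have h : 2 * X ^ 3 * (X + 1) ≠ (0 : RatFunc ℚ) :=
    mul_ne_zero (mul_ne_zero two_ne_zero (pow_ne_zero 3 X_ne_zero)) X_add_one_ne_zero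
  convert h using 1
  simp only [W18]
  ring

open Classical in
theorem addX_X_pow_three_zero :
    W18.addX (X ^ 3) 0 (W18.slope (X ^ 3) 0 (X ^ 3 + X ^ 4) 0) = 2 * X + 1 := by
  have hX3 : (X ^ 3 : RatFunc ℚ) ≠ 0 := pow_ne_zero 3 X_ne_zero
  rw [slope_of_X_ne hX3, addX]
  simp only [W18]
  field_simp
  ring

end W18

open Classical in
/-- `(0,0)` has order 2 and `(e³, e³ + e⁴)` lies on the curve and has infinite order. -/
theorem stmt18 :
    ∃ h₀ : W18.Nonsingular 0 0,
      ∃ hP : W18.Nonsingular (RatFunc.X ^ 3) (RatFunc.X ^ 3 + RatFunc.X ^ 4),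
      addOrderOf (WeierstrassCurve.Affine.Point.some _ _ h₀) = 2 ∧
      ¬ IsOfFinAddOrder (WeierstrassCurve.Affine.Point.some _ _ hP) := by
  refine ⟨W18.nonsingular_zero_zero, W18.nonsingular_X_pow_three,
    addOrderOf_some_of_Y_eq_zero rfl rfl _, fun hP ↦ ?_⟩
  have hT := fun Q (hQ : 2 • Q = 0) ↦ eq_zero_or_eq_some_zero_zero_of_two_nsmul_eq_zero rfl rfl rfl
    W18.not_isSquare_a₂_sq_sub_four_mul_a₄ W18.nonsingular_zero_zero hQ
  rcases exists_two_nsmul_eq_of_isOfFinAddOrder hT hP with ⟨Q, hQ⟩ | ⟨Q, hQ⟩ | ⟨Q, hQ⟩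
  · exact RatFunc.not_isSquare_X_pow_three (isSquare_of_two_nsmul_eq_some rfl rfl rfl hQ)
  · exact W18.not_isSquare_a₄ (isSquare_a₄_of_two_nsmul_eq_some_zero rfl rfl rfl hQ)
  · rw [Point.add_of_X_ne (pow_ne_zero 3 RatFunc.X_ne_zero)] at hQ
    have h := isSquare_of_two_nsmul_eq_some rfl rfl rfl hQ
    rw [W18.addX_X_pow_three_zero] at h
    exact W18.not_isSquare_two_mul_X_add_one h
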